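/- For P(t) = t² - 2bt with b ≠ 0, the ring R_2(P) = ℂ[t,t⁻¹,u]/(u² - (t² - 2bt)) is isomorphic as a ℂ-algebra to ℂ[s, s⁻¹, (s+1)⁻¹]. -/

import Mathlib

/-!
The conic `u² = t² - 2bt` is rational: the substitution `s = (u - t) / (2t)` has the inverse
`t = -b / (2s(s + 1))`, `u = (2s + 1) t`, because `4t² s(s + 1) = (u - t)(u + t) = -2bt`. The same
identity, read as `2t · s(s + 1) = -b`, shows that `t` is a unit exactly when `s(s + 1)` is, so
inverting `t` on the conic corresponds to inverting `s` and `s + 1` on the line.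
-/

open Polynomial

section

open scoped LaurentPolynomial
open LaurentPolynomial (T)

namespace LaurentPolynomial

variable {R S : Type*} [CommSemiring R]

instance isScalarTower_polynomial : IsScalarTower R R[X] R[T;T⁻¹] :=
  IsScalarTower.of_algebraMap_eq fun r => by
    simp [algebraMap_eq_toLaurent, ← C_eq_algebraMap]

variable [CommSemiring S] [Algebra R S]

theorem algHom_ext {f g : R[T;T⁻¹] →ₐ[R] S} (h : f (T 1) = g (T 1)) : f = g :=
  IsLocalization.algHom_ext (Submonoid.powers X) <| Polynomial.algHom_ext <| by
    change f (algebraMap R[X] R[T;T⁻¹] X) = g (algebraMap R[X] R[T;T⁻¹] X)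
    rwa [algebraMap_eq_toLaurent, toLaurent_X]

theorem algHom_toLaurent (f : R[T;T⁻¹] →ₐ[R] S) (p : R[X]) :
    f (toLaurent p) = aeval (f (T 1)) p := by
  rw [← toLaurentAlg_apply, ← AlgHom.comp_apply]
  congr 1
  exact Polynomial.algHom_ext (by simp)

theorem liftAlgHom_T_one {τ : S} (hτ : IsUnit (aeval τ X)) :
    IsLocalization.Away.liftAlgHom (X : R[X]) hτ (T 1 : R[T;T⁻¹]) = τ := by
  rw [← toLaurent_X, ← algebraMap_eq_toLaurent, IsLocalization.Away.liftAlgHom_apply,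
    IsLocalization.Away.lift_eq]
  exact aeval_X τ

end LaurentPolynomial

end

theorem IsUnit.map_two {R A : Type*} [CommSemiring R] [Semiring A] [Algebra R A]
    (h2 : IsUnit (2 : R)) : IsUnit (2 : A) := by
  simpa only [map_ofNat] using h2.map (algebraMap R A)

section

variable {S : Type*} [CommRing S] {β τ σ υ : S}

theorem conic_of_param (h : τ * (2 * (σ * (σ + 1))) = -β) :
    ((2 * σ + 1) * τ) ^ 2 = τ ^ 2 - 2 * β * τ := by
  linear_combination 2 * τ * h

theorem param_of_conic (hτ : IsUnit (2 * τ)) (hυ : υ ^ 2 = τ ^ 2 - 2 * β * τ)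
    (hσ : σ * (2 * τ) = υ - τ) : τ * (2 * (σ * (σ + 1))) = -β := by
  refine hτ.mul_left_inj.mp ?_
  linear_combination (σ * (2 * τ) + υ + τ) * hσ + hυ

end

section

open scoped LaurentPolynomial
open LaurentPolynomial (T)

variable {R : Type*} [CommRing R]

/-- The ring `R_2(P)` for `P = t² - 2bt`: `t` is the Laurent variable `T 1` and `u` the adjoined
root. -/
abbrev LaurentConic (b : R) : Type _ :=
  AdjoinRoot ((X : R[T;T⁻¹][X]) ^ 2 - C (toLaurent (X ^ 2 - C (2 * b) * X)))

namespace LaurentConic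

variable (b : R)

noncomputable def t : LaurentConic b := AdjoinRoot.of _ (T 1)

noncomputable def u : LaurentConic b := AdjoinRoot.root _

theorem isUnit_t : IsUnit (t b) := (LaurentPolynomial.isUnit_T 1).map _

theorem u_sq : u b ^ 2 = t b ^ 2 - 2 * algebraMap R _ b * t b := by
  have h := AdjoinRoot.eval₂_root
    ((X : R[T;T⁻¹][X]) ^ 2 - C (toLaurent (X ^ 2 - C (2 * b) * X)))
  rw [eval₂_sub, eval₂_X_pow, eval₂_C] at h
  erw [LaurentPolynomial.algHom_toLaurent (AdjoinRoot.ofAlgHom R _)] at h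
  simp only [map_sub, map_mul, map_pow, aeval_X, aeval_C, map_ofNat] at h
  change u b ^ 2 - (t b ^ 2 - 2 * algebraMap R _ b * t b) = 0 at h
  linear_combination h

variable {b} {S : Type*} [CommRing S] [Algebra R S]

noncomputable def lift (τ υ : S) (hτ : IsUnit τ) (h : υ ^ 2 = τ ^ 2 - 2 * algebraMap R S b * τ) :
    LaurentConic b →ₐ[R] S :=
  AdjoinRoot.liftAlgHom _ (IsLocalization.Away.liftAlgHom X (f := aeval τ) (by rwa [aeval_X])) υ
    (by
      rw [eval₂_sub, eval₂_X_pow, eval₂_C, AlgHom.coe_toRingHom,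
        LaurentPolynomial.algHom_toLaurent, LaurentPolynomial.liftAlgHom_T_one]
      simp only [map_sub, map_mul, map_pow, aeval_X, aeval_C, map_ofNat]
      rw [h, sub_self])

@[simp]
theorem lift_t (τ υ : S) (hτ) (h) : lift (b := b) τ υ hτ h (t b) = τ := by
  rw [lift, t, AdjoinRoot.liftAlgHom_of, LaurentPolynomial.liftAlgHom_T_one]

@[simp]
theorem lift_u (τ υ : S) (hτ) (h) : lift (b := b) τ υ hτ h (u b) = υ :=
  AdjoinRoot.liftAlgHom_root ..

theorem algHom_ext {f g : LaurentConic b →ₐ[R] S} (ht : f (t b) = g (t b))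
    (hu : f (u b) = g (u b)) : f = g :=
  AdjoinRoot.algHom_ext' (LaurentPolynomial.algHom_ext ht) hu

end LaurentConic

end

section

variable (R : Type*) [CommRing R]

/-- The ring `R[s, s⁻¹, (s + 1)⁻¹]`. -/
abbrev LineMinusTwoPoints : Type _ := Localization.Away (X * (X + 1) : R[X])

namespace LineMinusTwoPoints

noncomputable def s : LineMinusTwoPoints R := algebraMap R[X] _ X

theorem isUnit_s_mul_s_add_one : IsUnit (s R * (s R + 1)) := by
  have h := IsLocalization.Away.algebraMap_isUnit (S := LineMinusTwoPoints R) (X * (X + 1) : R[X])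
  rwa [map_mul, map_add, map_one] at h

variable {R} {S : Type*} [CommRing S] [Algebra R S]

noncomputable def lift (σ : S) (hσ : IsUnit (σ * (σ + 1))) : LineMinusTwoPoints R →ₐ[R] S :=
  IsLocalization.Away.liftAlgHom (X * (X + 1) : R[X]) (f := aeval σ) (by simpa using hσ)

@[simp]
theorem lift_s (σ : S) (hσ) : lift (R := R) σ hσ (s R) = σ := by
  rw [lift, s, IsLocalization.Away.liftAlgHom_apply, IsLocalization.Away.lift_eq]
  exact aeval_X σ

theorem algHom_ext {f g : LineMinusTwoPoints R →ₐ[R] S} (h : f (s R) = g (s R)) : f = g :=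
  IsLocalization.algHom_ext (Submonoid.powers (X * (X + 1) : R[X])) (Polynomial.algHom_ext h)

variable {b : R}

noncomputable def tCoord (b : R) : LineMinusTwoPoints R :=
  -algebraMap R (LineMinusTwoPoints R) b * Ring.inverse (2 * (s R * (s R + 1)))

theorem tCoord_mul (h2 : IsUnit (2 : R)) :
    tCoord b * (2 * (s R * (s R + 1))) = -algebraMap R (LineMinusTwoPoints R) b := by
  rw [tCoord, mul_assoc, Ring.inverse_mul_cancel _ (h2.map_two.mul (isUnit_s_mul_s_add_one R)),
    mul_one]

theorem isUnit_tCoord (h2 : IsUnit (2 : R)) (hb : IsUnit b) : IsUnit (tCoord b) :=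
  isUnit_of_mul_isUnit_left (y := 2 * (s R * (s R + 1))) <| by
    rw [tCoord_mul h2]
    exact (hb.map _).neg

end LineMinusTwoPoints

end

namespace LaurentConic

open LineMinusTwoPoints

variable {R : Type*} [CommRing R] {b : R}

noncomputable def sCoord (b : R) : LaurentConic b := (u b - t b) * Ring.inverse (2 * t b)

theorem isUnit_two_mul_t (h2 : IsUnit (2 : R)) : IsUnit (2 * t b) :=
  h2.map_two.mul (isUnit_t b)

theorem sCoord_mul (h2 : IsUnit (2 : R)) : sCoord b * (2 * t b) = u b - t b := by
  rw [sCoord, mul_assoc, Ring.inverse_mul_cancel _ (isUnit_two_mul_t h2), mul_one]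

theorem t_mul_sCoord (h2 : IsUnit (2 : R)) :
    t b * (2 * (sCoord b * (sCoord b + 1))) = -algebraMap R _ b :=
  param_of_conic (isUnit_two_mul_t h2) (u_sq b) (sCoord_mul h2)

theorem isUnit_sCoord_mul (h2 : IsUnit (2 : R)) (hb : IsUnit b) :
    IsUnit (sCoord b * (sCoord b + 1)) := by
  have h : IsUnit (t b * (2 * (sCoord b * (sCoord b + 1)))) := by
    rw [t_mul_sCoord h2]
    exact (hb.map _).neg
  exact isUnit_of_mul_isUnit_right (isUnit_of_mul_isUnit_right h)

variable (h2 : IsUnit (2 : R)) (hb : IsUnit b)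

noncomputable def toLine : LaurentConic b →ₐ[R] LineMinusTwoPoints R :=
  lift (tCoord b) ((2 * s R + 1) * tCoord b) (isUnit_tCoord h2 hb)
    (conic_of_param (tCoord_mul h2))

noncomputable def ofLine : LineMinusTwoPoints R →ₐ[R] LaurentConic b :=
  LineMinusTwoPoints.lift (sCoord b) (isUnit_sCoord_mul h2 hb)

@[simp]
theorem toLine_t : toLine h2 hb (t b) = tCoord b := lift_t ..

@[simp]
theorem toLine_u : toLine h2 hb (u b) = (2 * s R + 1) * tCoord b := lift_u ..

@[simp]
theorem ofLine_s : ofLine h2 hb (s R) = sCoord b := LineMinusTwoPoints.lift_s ..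

theorem toLine_sCoord : toLine h2 hb (sCoord b) = s R := by
  refine ((isUnit_two_mul_t h2).map (toLine h2 hb)).mul_left_inj.mp ?_
  rw [← map_mul, sCoord_mul h2]
  simp only [map_sub, map_mul, map_ofNat, toLine_t, toLine_u]
  ring

theorem ofLine_tCoord : ofLine h2 hb (tCoord b) = t b := by
  refine (h2.map_two.mul (isUnit_sCoord_mul h2 hb)).mul_left_inj.mp ?_
  have h := congrArg (ofLine h2 hb) (tCoord_mul (b := b) h2)
  simp only [map_mul, map_add, map_one, map_neg, map_ofNat, ofLine_s, AlgHom.commutes] at h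
  rw [h, t_mul_sCoord h2]

theorem toLine_comp_ofLine : (toLine h2 hb).comp (ofLine h2 hb) = AlgHom.id R _ :=
  LineMinusTwoPoints.algHom_ext <| by
    rw [AlgHom.comp_apply, ofLine_s, toLine_sCoord, AlgHom.id_apply]

theorem ofLine_comp_toLine : (ofLine h2 hb).comp (toLine h2 hb) = AlgHom.id R _ := by
  refine algHom_ext ?_ ?_ <;> simp only [AlgHom.comp_apply, AlgHom.id_apply]
  · rw [toLine_t, ofLine_tCoord]
  · simp only [toLine_u, map_mul, map_add, map_one, map_ofNat, ofLine_s, ofLine_tCoord]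
    linear_combination sCoord_mul h2

noncomputable def equivLineMinusTwoPoints : LaurentConic b ≃ₐ[R] LineMinusTwoPoints R :=
  AlgEquiv.ofAlgHom (toLine h2 hb) (ofLine h2 hb) (toLine_comp_ofLine h2 hb)
    (ofLine_comp_toLine h2 hb)

end LaurentConic

/-- For `P(t) = t² - 2bt` with `b ≠ 0`, `R_2(P)` is isomorphic as a ℂ-algebra
to `ℂ[s, s⁻¹, (s+1)⁻¹]`, realized as the localization of `ℂ[s]` away from
`s(s+1)`. -/
theorem stmt_8 (b : ℂ) (hb : b ≠ 0) :
    Nonempty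
      ((Polynomial (LaurentPolynomial ℂ) ⧸
          Ideal.span {(X : Polynomial (LaurentPolynomial ℂ)) ^ 2 -
            C (Polynomial.toLaurent (X ^ 2 - C (2 * b) * X))}) ≃ₐ[ℂ]
        Localization.Away ((X * (X + 1)) : Polynomial ℂ)) :=
  ⟨LaurentConic.equivLineMinusTwoPoints two_ne_zero.isUnit hb.isUnit⟩
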